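/- (Dehn–Sommerville relations for balanced simplicial complexes, h-version.) Let Δ be a balanced simplicial complex of type a = (a_1, …, a_m) with flag h-numbers (h_b)_{b ≤ a}, and let d = |a|. Then for every b ∈ ℕ^m with b ≤ a: h_b − h_{a−b} = (−1)^{|a|−|b|} · ∑_{F ∈ Δ, b(F) ≤ b} (∏_{j=1}^m binomial(a_j − b(F)_j, a_j − b_j)) · ε_F, where ε_F = (−1)^{d−1−|F|}(m_F − 1). -/

import Mathlib

open Finset MvPolynomial

/-- A (finite, abstract) simplicial complex: a finite collection of finite subsets of `V`
containing the empty set and closed under taking subsets. -/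
def IsSimplicialComplex {V : Type*} [DecidableEq V] (Δ : Finset (Finset V)) : Prop :=
  ∅ ∈ Δ ∧ ∀ F ∈ Δ, ∀ G ⊆ F, G ∈ Δ

/-- `Δ` has dimension `d - 1`: every face has at most `d` elements and some face has
exactly `d` elements. -/
def HasDimension {V : Type*} [DecidableEq V] (Δ : Finset (Finset V)) (d : ℕ) : Prop :=
  (∀ F ∈ Δ, F.card ≤ d) ∧ ∃ F ∈ Δ, F.card = d

/-- `fnum Δ i` is the number of faces of `Δ` with exactly `i` elements, i.e. `f_{i-1}`. -/
def fnum {V : Type*} [DecidableEq V] (Δ : Finset (Finset V)) (i : ℕ) : ℕ :=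
  (Δ.filter fun F => F.card = i).card

/-- The multiplicity `m_F = ∑_{G ∈ Δ, F ⊆ G} (−1)^{d−|G|}` of a face `F` of a complex of
dimension `d − 1` (all faces `G` satisfy `|G| ≤ d`, so `d - G.card` is the usual subtraction). -/
def mult {V : Type*} [DecidableEq V] (Δ : Finset (Finset V)) (d : ℕ) (F : Finset V) : ℤ :=
  ∑ G ∈ Δ.filter (fun G => F ⊆ G), (-1 : ℤ) ^ (d - G.card)

/-- The reduced Euler characteristic `χ̃(Γ) = ∑_{G ∈ Γ} (−1)^{|G|−1}`; the exponent is
written `|G| + 1`, which has the same parity as `|G| − 1` (the empty face contributes `−1`). -/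
def chiTilde {V : Type*} [DecidableEq V] (Γ : Finset (Finset V)) : ℤ :=
  ∑ G ∈ Γ, (-1 : ℤ) ^ (G.card + 1)

/-- The link of a face `F` in `Δ`. -/
def link {V : Type*} [DecidableEq V] (Δ : Finset (Finset V)) (F : Finset V) :
    Finset (Finset V) :=
  Δ.filter fun G => G ∩ F = ∅ ∧ G ∪ F ∈ Δ

/-- `Δ` (of dimension `d − 1`) is reciprocal if `m_F ∈ {0, 1}` for every nonempty face. -/
def IsReciprocal {V : Type*} [DecidableEq V] (Δ : Finset (Finset V)) (d : ℕ) : Prop :=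
  ∀ F ∈ Δ, F ≠ ∅ → mult Δ d F = 0 ∨ mult Δ d F = 1

/-- `Δ` (of dimension `d − 1`) is semi-Eulerian if `m_F = 1` for every nonempty face. -/
def IsSemiEulerian {V : Type*} [DecidableEq V] (Δ : Finset (Finset V)) (d : ℕ) : Prop :=
  ∀ F ∈ Δ, F ≠ ∅ → mult Δ d F = 1

/-- `fint Δ d i` is the number of interior faces (nonempty faces with `m_F = 1`) of `Δ`
with exactly `i` elements, i.e. `f^int_{i-1}`. -/
def fint {V : Type*} [DecidableEq V] (Δ : Finset (Finset V)) (d : ℕ) (i : ℕ) : ℕ :=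
  (Δ.filter fun F => F.card = i ∧ F ≠ ∅ ∧ mult Δ d F = 1).card

/-- `bvec κ F j` is the number of vertices of `F` with color `j`. -/
def bvec {V : Type*} [DecidableEq V] {m : ℕ} (κ : V → Fin m) (F : Finset V) (j : Fin m) : ℕ :=
  (F.filter fun v => κ v = j).card

/-- `Δ` is balanced of type `a` with respect to the coloring `κ`: every face of `Δ` that is
maximal under inclusion has exactly `a j` vertices of color `j`, for each color `j`. -/
def IsBalanced {V : Type*} [DecidableEq V] {m : ℕ} (Δ : Finset (Finset V))
    (κ : V → Fin m) (a : Fin m → ℕ) : Prop :=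
  ∀ F ∈ Δ, (∀ G ∈ Δ, F ⊆ G → G = F) → ∀ j, bvec κ F j = a j

/-!
The numbers `h_b` and `h_{a-b}` are coefficients of the flag `h`-polynomial
`∑_F x^{b(F)} (1 - x)^{a - b(F)}`. The coefficient of `x^{a-b}` in the term of `F` is the
coefficient of `x^b` in `(x - 1)^{a - b(F)}`, and expanding
`∏_{v ∈ G} (x_{κ v} + (1 - x_{κ v})) = 1` over the subsets of each face `G` gives
`∑_F (x - 1)^{a - b(F)} = ∑_F m_F x^{b(F)} (1 - x)^{a - b(F)}`.
So `h_{a-b}` is the sum giving `h_b` with the term of `F` weighted by `m_F`, and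
`h_b - h_{a-b} = ∑_F (1 - m_F) [x^b] x^{b(F)} (1 - x)^{a - b(F)}`.
-/

namespace Polynomial

variable {R : Type*} [CommRing R]

theorem coeff_one_sub_X_pow (n k : ℕ) :
    ((1 - X : R[X]) ^ n).coeff k = (-1) ^ k * n.choose k := by
  have h : (1 - X : R[X]) ^ n = C ((-1) ^ n) * (X + C (-1)) ^ n := by
    rw [C_pow, ← mul_pow, C_neg, C_1]; ring
  rw [h, coeff_C_mul, coeff_X_add_C_pow, ← mul_assoc, ← pow_add]
  rcases le_or_gt k n with hkn | hnk
  · rw [show n + (n - k) = k + 2 * (n - k) by omega, pow_add, pow_mul]; simp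
  · simp [Nat.choose_eq_zero_of_lt hnk]

theorem coeff_X_pow_mul_one_sub_X_pow (e n k : ℕ) :
    (X ^ e * (1 - X : R[X]) ^ n).coeff k
      = if e ≤ k then (-1 : R) ^ (k - e) * n.choose (k - e) else 0 := by
  rw [coeff_X_pow_mul', coeff_one_sub_X_pow]

theorem coeff_X_sub_one_pow (n k : ℕ) :
    ((X - 1 : R[X]) ^ n).coeff k = (-1 : R) ^ (n - k) * n.choose k := by
  rw [← C_1, sub_eq_add_neg, ← C_neg, coeff_X_add_C_pow]

theorem coeff_X_pow_mul_one_sub_X_pow_reflect (e n k : ℕ) (hk : k ≤ e + n) :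
    (X ^ e * (1 - X : R[X]) ^ n).coeff (e + n - k) = ((X - 1 : R[X]) ^ n).coeff k := by
  rw [coeff_X_pow_mul_one_sub_X_pow, coeff_X_sub_one_pow]
  rcases le_or_gt k n with hkn | hnk
  · rw [if_pos (by omega), show e + n - k - e = n - k by omega, Nat.choose_symm hkn]
  · rw [if_neg (by omega), Nat.choose_eq_zero_of_lt hnk, Nat.cast_zero, mul_zero]

theorem prod_coeff_X_pow_mul_one_sub_X_pow {σ : Type*} [Fintype σ]
    (e c a : σ → ℕ) (hca : ∀ j, c j ≤ a j) :
    ∏ j, (X ^ e j * (1 - X) ^ (a j - e j) : R[X]).coeff (c j)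
      = if ∀ j, e j ≤ c j then
          (-1 : R) ^ (∑ j, c j + ∑ j, e j) * ∏ j, ((a j - e j).choose (a j - c j) : R)
        else 0 := by
  simp only [coeff_X_pow_mul_one_sub_X_pow]
  split_ifs with hec
  · rw [prod_congr rfl fun j _ => if_pos (hec j), prod_mul_distrib, prod_pow_eq_pow_sum]
    congr 1
    · have hsplit : ∑ j, c j = ∑ j, (c j - e j) + ∑ j, e j := by
        rw [← sum_add_distrib]
        exact sum_congr rfl fun j _ => (Nat.sub_add_cancel (hec j)).symm
      rw [show ∑ j, c j + ∑ j, e j = ∑ j, (c j - e j) + 2 * ∑ j, e j by omega, pow_add, pow_mul]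
      simp
    · refine prod_congr rfl fun j _ => ?_
      have := hec j
      have := hca j
      rw [Nat.choose_symm_of_eq_add (n := a j - e j) (a := c j - e j) (b := a j - c j) (by omega)]
  · obtain ⟨j, hj⟩ := not_forall.1 hec
    exact prod_eq_zero (mem_univ j) (if_neg hj)

end Polynomial

namespace MvPolynomial

section CommSemiring

variable {R σ : Type*} [CommSemiring R] [Fintype σ]

theorem prod_univ_X_pow_eq_monomial (t : σ → ℕ) :
    ∏ i, (X i : MvPolynomial σ R) ^ t i = monomial (Finsupp.equivFunOnFinite.symm t) 1 := by
  rw [monomial_eq, C_1, one_mul, Finsupp.prod_fintype _ _ fun _ => pow_zero _]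
  rfl

variable [DecidableEq σ]

theorem coeff_sum_C_mul_prod_X_pow {s : Finset (σ → ℕ)} (h : (σ → ℕ) → R) {b : σ → ℕ}
    (hb : b ∈ s) :
    coeff (Finsupp.equivFunOnFinite.symm b) (∑ c ∈ s, C (h c) * ∏ i, X i ^ c i) = h b := by
  simp [prod_univ_X_pow_eq_monomial, C_mul_monomial, coeff_sum, coeff_monomial, hb]

theorem coeff_prod_aeval_X (p : σ → Polynomial R) (c : σ →₀ ℕ) :
    coeff c (∏ i, Polynomial.aeval (X i) (p i)) = ∏ i, (p i).coeff (c i) := by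
  have hmon : ∀ t : σ → ℕ, ∏ i, (p i).coeff (t i) • (X i : MvPolynomial σ R) ^ t i
      = monomial (Finsupp.equivFunOnFinite.symm t) (∏ i, (p i).coeff (t i)) := by
    intro t
    rw [← mul_one (∏ i, (p i).coeff (t i)), ← smul_eq_mul, ← smul_monomial,
      ← prod_univ_X_pow_eq_monomial, smul_eq_C_mul, map_prod, ← prod_mul_distrib]
    simp [smul_eq_C_mul]
  simp only [Polynomial.aeval_eq_sum_range, prod_univ_sum, hmon, coeff_sum, coeff_monomial]
  rw [sum_eq_single (⇑c)]
  · simp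
  · intro t _ ht
    exact if_neg fun h => ht (by rw [← h]; rfl)
  · intro hc
    obtain ⟨i, hi⟩ : ∃ i, (p i).natDegree < c i := by
      simpa [Fintype.mem_piFinset, Nat.lt_succ_iff] using hc
    rw [Finsupp.equivFunOnFinite_symm_coe, if_pos rfl]
    exact prod_eq_zero (mem_univ i) (Polynomial.coeff_eq_zero_of_natDegree_lt hi)

end CommSemiring

section CommRing

variable {R σ : Type*} [CommRing R] [Fintype σ] [DecidableEq σ]

theorem coeff_prod_X_pow_mul_prod_one_sub_X_pow (e n c : σ → ℕ) :
    coeff (Finsupp.equivFunOnFinite.symm c)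
        ((∏ i, (X i : MvPolynomial σ R) ^ e i) * ∏ i, (1 - X i) ^ n i)
      = ∏ i, (Polynomial.X ^ e i * (1 - Polynomial.X) ^ n i : Polynomial R).coeff (c i) := by
  rw [← prod_mul_distrib]
  convert coeff_prod_aeval_X
      (fun i => (Polynomial.X ^ e i * (1 - Polynomial.X) ^ n i : Polynomial R))
      (Finsupp.equivFunOnFinite.symm c) using 3 <;> simp

theorem coeff_prod_X_sub_one_pow (n c : σ → ℕ) :
    coeff (Finsupp.equivFunOnFinite.symm c) (∏ i, ((X i : MvPolynomial σ R) - 1) ^ n i)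
      = ∏ i, ((Polynomial.X - 1) ^ n i : Polynomial R).coeff (c i) := by
  convert coeff_prod_aeval_X (fun i => ((Polynomial.X - 1) ^ n i : Polynomial R))
      (Finsupp.equivFunOnFinite.symm c) using 3 <;> simp

end CommRing

end MvPolynomial

section SimplicialComplex

variable {V : Type*} [DecidableEq V] {m : ℕ}

theorem card_eq_sum_bvec (κ : V → Fin m) (F : Finset V) : F.card = ∑ j, bvec κ F j :=
  card_eq_sum_card_fiberwise fun v _ => mem_univ (κ v)

theorem prod_pow_bvec {M : Type*} [CommMonoid M] (κ : V → Fin m) (g : Fin m → M)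
    (F : Finset V) : ∏ j, g j ^ bvec κ F j = ∏ v ∈ F, g (κ v) := by
  rw [← prod_fiberwise' F κ g]
  simp [bvec]

theorem bvec_sdiff_add (κ : V → Fin m) {F G : Finset V} (h : F ⊆ G) (j : Fin m) :
    bvec κ (G \ F) j + bvec κ F j = bvec κ G j := by
  rw [bvec, bvec, ← card_union_of_disjoint (disjoint_filter_filter sdiff_disjoint),
    ← filter_union, sdiff_union_of_subset h]
  rfl

theorem bvec_mono (κ : V → Fin m) {F G : Finset V} (h : F ⊆ G) (j : Fin m) :
    bvec κ F j ≤ bvec κ G j :=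
  card_le_card (filter_subset_filter _ h)

theorem IsBalanced.bvec_le {Δ : Finset (Finset V)} {κ : V → Fin m} {a : Fin m → ℕ}
    (hbal : IsBalanced Δ κ a) {G : Finset V} (hG : G ∈ Δ) (j : Fin m) : bvec κ G j ≤ a j := by
  obtain ⟨F, hF, hmax⟩ :=
    exists_max_image (Δ.filter (G ⊆ ·)) card ⟨G, mem_filter.2 ⟨hG, subset_rfl⟩⟩
  rw [mem_filter] at hF
  have hfacet : ∀ H ∈ Δ, F ⊆ H → H = F := fun H hH hFH =>
    (eq_of_subset_of_card_le hFH (hmax H (mem_filter.2 ⟨hH, hF.2.trans hFH⟩))).symm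
  exact hbal F hF.1 hfacet j ▸ bvec_mono κ hF.2 j

theorem sum_mult_smul_eq_sum_powerset {M : Type*} [AddCommGroup M] {Δ : Finset (Finset V)}
    (hΔ : IsSimplicialComplex Δ) (d : ℕ) (P : Finset V → M) :
    ∑ F ∈ Δ, mult Δ d F • P F = ∑ G ∈ Δ, (-1 : ℤ) ^ (d - G.card) • ∑ F ∈ G.powerset, P F := by
  simp only [mult, sum_smul, smul_sum]
  refine sum_comm' fun F G => ?_
  simp only [mem_filter, mem_powerset]
  exact ⟨fun ⟨hF, hG, hFG⟩ => ⟨hFG, hG⟩, fun ⟨hFG, hG⟩ => ⟨hΔ.2 G hG F hFG, hG, hFG⟩⟩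

variable (R : Type*) [CommRing R]

noncomputable def facePoly (κ : V → Fin m) (a : Fin m → ℕ) (F : Finset V) :
    MvPolynomial (Fin m) R :=
  (∏ j, X j ^ bvec κ F j) * ∏ j, (1 - X j) ^ (a j - bvec κ F j)

variable {R}

theorem sum_powerset_facePoly (κ : V → Fin m) (a : Fin m → ℕ) {G : Finset V}
    (hG : ∀ j, bvec κ G j ≤ a j) :
    ∑ F ∈ G.powerset, facePoly R κ a F = ∏ j, (1 - X j) ^ (a j - bvec κ G j) := by
  have hsplit : ∀ F ∈ G.powerset, ∏ j, (1 - X j : MvPolynomial (Fin m) R) ^ (a j - bvec κ F j)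
      = (∏ j, (1 - X j) ^ (a j - bvec κ G j)) * ∏ v ∈ G \ F, (1 - X (κ v)) := by
    intro F hF
    rw [← prod_pow_bvec κ fun j => 1 - X j, ← prod_mul_distrib]
    refine prod_congr rfl fun j _ => ?_
    rw [← pow_add]
    have := bvec_sdiff_add κ (mem_powerset.1 hF) j
    have := hG j
    congr 1
    omega
  calc _ = (∏ j, (1 - X j) ^ (a j - bvec κ G j))
        * ∑ F ∈ G.powerset, (∏ v ∈ F, (X (κ v) : MvPolynomial (Fin m) R))
          * ∏ v ∈ G \ F, (1 - X (κ v)) := by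
        rw [mul_sum]
        refine sum_congr rfl fun F hF => ?_
        rw [facePoly, hsplit F hF, prod_pow_bvec]
        ring
    _ = _ := by simp [← prod_add]

theorem coeff_facePoly (κ : V → Fin m) (a c : Fin m → ℕ) (F : Finset V) :
    coeff (Finsupp.equivFunOnFinite.symm c) (facePoly R κ a F)
      = ∏ j, (Polynomial.X ^ bvec κ F j * (1 - Polynomial.X) ^ (a j - bvec κ F j)
          : Polynomial R).coeff (c j) :=
  coeff_prod_X_pow_mul_prod_one_sub_X_pow _ _ c

theorem coeff_facePoly_of_le (κ : V → Fin m) {a c : Fin m → ℕ} (hca : c ≤ a) (F : Finset V) :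
    coeff (Finsupp.equivFunOnFinite.symm c) (facePoly R κ a F)
      = if ∀ j, bvec κ F j ≤ c j then
          (-1 : R) ^ (∑ j, c j + F.card) * ∏ j, ((a j - bvec κ F j).choose (a j - c j) : R)
        else 0 := by
  rw [coeff_facePoly, Polynomial.prod_coeff_X_pow_mul_one_sub_X_pow _ _ _ hca,
    card_eq_sum_bvec κ F]
  -- the two sides differ only in the `Decidable` instance of `∀ j : Fin m, _`
  congr

theorem sum_mult_smul_facePoly {Δ : Finset (Finset V)} (hΔ : IsSimplicialComplex Δ)
    {κ : V → Fin m} {a : Fin m → ℕ} (hbal : IsBalanced Δ κ a) :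
    ∑ F ∈ Δ, mult Δ (∑ j, a j) F • facePoly R κ a F
      = ∑ G ∈ Δ, ∏ j, (X j - 1) ^ (a j - bvec κ G j) := by
  rw [sum_mult_smul_eq_sum_powerset hΔ]
  refine sum_congr rfl fun G hG => ?_
  have hdim : ∑ j, a j - G.card = ∑ j, (a j - bvec κ G j) := by
    rw [card_eq_sum_bvec κ, sum_tsub_distrib _ fun j _ => hbal.bvec_le hG j]
  rw [sum_powerset_facePoly κ a (hbal.bvec_le hG), hdim, ← prod_pow_eq_pow_sum, zsmul_eq_mul]
  push_cast
  rw [← prod_mul_distrib]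
  refine prod_congr rfl fun j _ => ?_
  rw [← mul_pow]
  ring

theorem flagH_eq_sum_coeff_facePoly {Δ : Finset (Finset V)} {κ : V → Fin m} {a : Fin m → ℕ}
    {h : (Fin m → ℕ) → R}
    (hh : ∑ b ∈ Iic a, C (h b) * ∏ j, X j ^ b j = ∑ F ∈ Δ, facePoly R κ a F)
    {c : Fin m → ℕ} (hca : c ≤ a) :
    h c = ∑ F ∈ Δ, coeff (Finsupp.equivFunOnFinite.symm c) (facePoly R κ a F) := by
  rw [← coeff_sum_C_mul_prod_X_pow h (mem_Iic.2 hca), hh, coeff_sum]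

theorem flagH_tsub_eq_sum_mult_smul {Δ : Finset (Finset V)} (hΔ : IsSimplicialComplex Δ)
    {κ : V → Fin m} {a : Fin m → ℕ} (hbal : IsBalanced Δ κ a) {h : (Fin m → ℕ) → R}
    (hh : ∑ b ∈ Iic a, C (h b) * ∏ j, X j ^ b j = ∑ F ∈ Δ, facePoly R κ a F)
    {b : Fin m → ℕ} (hba : b ≤ a) :
    h (a - b) = ∑ F ∈ Δ, mult Δ (∑ j, a j) F •
      coeff (Finsupp.equivFunOnFinite.symm b) (facePoly R κ a F) := by
  calc h (a - b)
      = coeff (Finsupp.equivFunOnFinite.symm b) (∑ G ∈ Δ, ∏ j, (X j - 1) ^ (a j - bvec κ G j)) := by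
        rw [flagH_eq_sum_coeff_facePoly hh tsub_le_self, coeff_sum]
        refine sum_congr rfl fun G hG => ?_
        rw [coeff_facePoly, coeff_prod_X_sub_one_pow]
        refine prod_congr rfl fun j _ => ?_
        have := hbal.bvec_le hG j
        have : b j ≤ a j := hba j
        rw [← Polynomial.coeff_X_pow_mul_one_sub_X_pow_reflect (bvec κ G j) (a j - bvec κ G j) (b j)
            (by omega),
          Pi.sub_apply, show bvec κ G j + (a j - bvec κ G j) = a j by omega]
    _ = _ := by
        rw [← sum_mult_smul_facePoly hΔ hbal, coeff_sum]
        simp only [coeff_smul]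

end SimplicialComplex

/-- The sign exponents `∑ a + ∑ b` and `d + 1 + |F|` have the parities of `|a| - |b|` and
`d - 1 - |F|`. -/
theorem flag_DS_balanced_general {V : Type*} [DecidableEq V] (Δ : Finset (Finset V)) {m : ℕ}
    (κ : V → Fin m) (a : Fin m → ℕ) (d : ℕ) (hd : d = ∑ j, a j)
    (hΔ : IsSimplicialComplex Δ) (hbal : IsBalanced Δ κ a)
    (h : (Fin m → ℕ) → ℤ)
    (hh : (∑ b ∈ Finset.Iic a, C (h b) * ∏ j, X j ^ b j : MvPolynomial (Fin m) ℤ)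
        = ∑ F ∈ Δ, (∏ j, X j ^ bvec κ F j) * ∏ j, (1 - X j) ^ (a j - bvec κ F j)) :
    ∀ b : Fin m → ℕ, b ≤ a →
      h b - h (a - b)
        = (-1 : ℤ) ^ (∑ j, a j + ∑ j, b j)
            * ∑ F ∈ Δ.filter (fun F => ∀ j, bvec κ F j ≤ b j),
                (∏ j, ((a j - bvec κ F j).choose (a j - b j) : ℤ))
                  * ((-1 : ℤ) ^ (d + 1 + F.card) * (mult Δ d F - 1)) := by
  intro b hb
  rw [flagH_eq_sum_coeff_facePoly hh hb, flagH_tsub_eq_sum_mult_smul hΔ hbal hh hb, ← hd,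
    ← sum_sub_distrib, sum_filter, mul_sum]
  refine sum_congr rfl fun F _ => ?_
  rw [coeff_facePoly_of_le κ hb, hd]
  split_ifs
  · have hsign : (-1 : ℤ) ^ (∑ j, a j + ∑ j, b j) * (-1) ^ (∑ j, a j + 1 + F.card)
        = -(-1) ^ (∑ j, b j + F.card) := by
      rw [← pow_add, show ∑ j, a j + ∑ j, b j + (∑ j, a j + 1 + F.card)
        = ∑ j, b j + F.card + 1 + 2 * ∑ j, a j by ring, pow_add, pow_add, pow_mul]
      simp
    rw [smul_eq_mul, ← neg_neg ((-1 : ℤ) ^ (∑ j, b j + F.card)), ← hsign]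
    ring
  · simp

/-- Dehn–Sommerville relations for balanced simplicial complexes, h-version: for `b ≤ a`,
`h_b − h_{a−b} = (−1)^{|a|−|b|} ∑_{F ∈ Δ, b(F) ≤ b} (∏_j C(a_j − b(F)_j, a_j − b_j)) ε_F`,
where `ε_F = (−1)^{d−1−|F|}(m_F − 1)`; the sign exponents `∑ a + ∑ b` and `d + 1 + |F|`
have the same parities as `|a| − |b|` and `d − 1 − |F|` respectively. -/
theorem flag_DS_balanced {V : Type*} [DecidableEq V] (Δ : Finset (Finset V)) {m : ℕ}
    (hm : 1 ≤ m) (κ : V → Fin m) (a : Fin m → ℕ) (d : ℕ) (hd : d = ∑ j, a j) (hd1 : 1 ≤ d)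
    (hΔ : IsSimplicialComplex Δ) (hbal : IsBalanced Δ κ a)
    (h : (Fin m → ℕ) → ℤ)
    (hh : (∑ b ∈ Finset.Iic a, C (h b) * ∏ j, X j ^ b j : MvPolynomial (Fin m) ℤ)
        = ∑ F ∈ Δ, (∏ j, X j ^ bvec κ F j) * ∏ j, (1 - X j) ^ (a j - bvec κ F j)) :
    ∀ b : Fin m → ℕ, b ≤ a →
      h b - h (a - b)
        = (-1 : ℤ) ^ (∑ j, a j + ∑ j, b j)
            * ∑ F ∈ Δ.filter (fun F => ∀ j, bvec κ F j ≤ b j),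
                (∏ j, ((a j - bvec κ F j).choose (a j - b j) : ℤ))
                  * ((-1 : ℤ) ^ (d + 1 + F.card) * (mult Δ d F - 1)) :=
  flag_DS_balanced_general Δ κ a d hd hΔ hbal h hh
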